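/- arXiv:1304.7617 — 2 statements merged into one kernel-verified Lean document; each statement's English description precedes it below -/
import Mathlib

section
/- The linear functional τ on S^c defined by τ(Φ) = ∫₀¹ ∫_𝕋 Φ(x,y,0) dy dx is tracial: τ(Φ★Ψ) = τ(Ψ★Φ) for all Φ, Ψ ∈ S^c. -/
open MeasureTheory Complex

noncomputable section

/-- `e x = exp (2 π i x)`. -/
def expi (x : ℝ) : ℂ := Complex.exp (2 * Real.pi * Complex.I * x)

/-- Partial derivative in the first variable. -/
def pdX (f : ℝ → ℝ → ℂ) : ℝ → ℝ → ℂ := fun x y => deriv (fun x' => f x' y) x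

/-- Partial derivative in the second variable. -/
def pdY (f : ℝ → ℝ → ℂ) : ℝ → ℝ → ℂ := fun x y => deriv (fun y' => f x y') y

/-- The space `S^c`: smooth functions on `ℝ × 𝕋 × ℤ` (a function on the torus `𝕋`
is identified with a `1`-periodic function on `ℝ`) satisfying the quasi-periodicity
relation `Φ(x+k,y,p) = e(ckpy) Φ(x,y,p)` for `k ∈ ℤ`, together with the
Schwartz-type bounds: for every polynomial `P` on `ℤ`, all partial derivatives
`X̃ = ∂^{m+n}/∂x^m ∂y^n` and every compact `K ⊆ ℝ × 𝕋`, the function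
`P(p)(X̃Φ)(x,y,p)` is bounded on `K × ℤ`. -/
def IsSc (c : ℕ) (Φ : ℝ → ℝ → ℤ → ℂ) : Prop :=
  (∀ p : ℤ, ContDiff ℝ (⊤ : ℕ∞) (fun xy : ℝ × ℝ => Φ xy.1 xy.2 p)) ∧
  (∀ (x y : ℝ) (p : ℤ), Φ x (y + 1) p = Φ x y p) ∧
  (∀ (k : ℤ) (x y : ℝ) (p : ℤ),
    Φ (x + k) y p = expi ((c : ℝ) * (k : ℝ) * (p : ℝ) * y) * Φ x y p) ∧
  (∀ (P : Polynomial ℤ) (m n : ℕ) (K : Set (ℝ × ℝ)), IsCompact K →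
    ∃ C : ℝ, ∀ (x y : ℝ) (p : ℤ), (x, y) ∈ K →
      ‖((P.eval p : ℤ) : ℂ) * pdX^[m] (pdY^[n] (fun x' y' => Φ x' y' p)) x y‖ ≤ C)

/-- The product `★` of the quantum Heisenberg manifold. -/
def starProd (hbar μ ν : ℝ) (Φ Ψ : ℝ → ℝ → ℤ → ℂ) : ℝ → ℝ → ℤ → ℂ :=
  fun x y p => ∑' q : ℤ,
    Φ (x - hbar * ((q : ℝ) - (p : ℝ)) * μ) (y - hbar * ((q : ℝ) - (p : ℝ)) * ν) q *
      Ψ (x - hbar * (q : ℝ) * μ) (y - hbar * (q : ℝ) * ν) (p - q)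

/-- The involution `Φ*(x,y,p) = conj (Φ(x,y,-p))`. -/
def invol (Φ : ℝ → ℝ → ℤ → ℂ) : ℝ → ℝ → ℤ → ℂ :=
  fun x y p => starRingEnd ℂ (Φ x y (-p))

/-- The group multiplication on `G = ℝ³`: `(r,s,t)(r',s',t') = (r+r', s+s', t+t'+csr')`. -/
def heisMul (c : ℕ) (g h : ℝ × ℝ × ℝ) : ℝ × ℝ × ℝ :=
  (g.1 + h.1, g.2.1 + h.2.1, g.2.2 + h.2.2 + (c : ℝ) * g.2.1 * h.1)

/-- The action of `G = ℝ³` on `S^c`. -/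
def Lact (c : ℕ) (g : ℝ × ℝ × ℝ) (Φ : ℝ → ℝ → ℤ → ℂ) : ℝ → ℝ → ℤ → ℂ :=
  fun x y p =>
    expi ((p : ℝ) * (g.2.2 + (c : ℝ) * g.2.1 * (x - g.1))) * Φ (x - g.1) (y - g.2.1) p

/-- The trace `τ(Φ) = ∫₀¹ ∫_𝕋 Φ(x,y,0) dy dx`. -/
def tauQHM (Φ : ℝ → ℝ → ℤ → ℂ) : ℂ := ∫ x in (0:ℝ)..1, ∫ y in (0:ℝ)..1, Φ x y 0

/-- The derivation `d₁(Φ) = -∂Φ/∂x`. -/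
def d1 (Φ : ℝ → ℝ → ℤ → ℂ) : ℝ → ℝ → ℤ → ℂ :=
  fun x y p => - deriv (fun x' => Φ x' y p) x

/-- The derivation `d₂(Φ)(x,y,p) = 2πicpx·Φ(x,y,p) - ∂Φ/∂y(x,y,p)`. -/
def d2 (c : ℕ) (Φ : ℝ → ℝ → ℤ → ℂ) : ℝ → ℝ → ℤ → ℂ :=
  fun x y p => ((2 * Real.pi * (c : ℝ) * (p : ℝ) * x : ℝ) : ℂ) * Complex.I * Φ x y p -
    deriv (fun y' => Φ x y' p) y

/-- The derivation `d₃(Φ)(x,y,p) = 2πipcα·Φ(x,y,p)`. -/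
def d3 (c : ℕ) (α : ℝ) (Φ : ℝ → ℝ → ℤ → ℂ) : ℝ → ℝ → ℤ → ℂ :=
  fun x y p => ((2 * Real.pi * (p : ℝ) * (c : ℝ) * α : ℝ) : ℂ) * Complex.I * Φ x y p

/-- The measure on `ℝ × 𝕋 × ℤ`, the torus being identified with `[0,1)`:
Lebesgue measure on `ℝ`, Lebesgue measure restricted to `[0,1)`, and
counting measure on `ℤ`. -/
def μQHM : Measure (ℝ × ℝ × ℤ) :=
  (volume : Measure ℝ).prod
    (((volume : Measure ℝ).restrict (Set.Ico (0:ℝ) 1)).prod Measure.count)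

/-- `RepOf hbar μ ν Φ T` says that the bounded operator `T` on `L²(ℝ × 𝕋 × ℤ)` is
given by the formula `(π(Φ)ξ)(x,y,p) = Σ_q Φ(x-hbar(q-2p)μ, y-hbar(q-2p)ν, q) ξ(x,y,p-q)`. -/
def RepOf (hbar μ ν : ℝ) (Φ : ℝ → ℝ → ℤ → ℂ) (T : Lp ℂ 2 μQHM →L[ℂ] Lp ℂ 2 μQHM) : Prop :=
  ∀ ξ : Lp ℂ 2 μQHM,
    (T ξ : ℝ × ℝ × ℤ → ℂ) =ᵐ[μQHM]
      fun w => ∑' q : ℤ,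
        Φ (w.1 - hbar * ((q : ℝ) - 2 * (w.2.2 : ℝ)) * μ)
            (w.2.1 - hbar * ((q : ℝ) - 2 * (w.2.2 : ℝ)) * ν) q *
          (ξ : ℝ × ℝ × ℤ → ℂ) (w.1, w.2.1, w.2.2 - q)
/-! ### Auxiliary lemmas for the trace property -/

lemma expi_norm (t : ℝ) : ‖expi t‖ = 1 := by
  rw [expi, show (2 * (Real.pi : ℂ) * Complex.I * t) = ((2 * Real.pi * t : ℝ) : ℂ) * Complex.I by
    push_cast; ring]
  exact Complex.norm_exp_ofReal_mul_I _

lemma expi_mul_expi_neg (t : ℝ) : expi t * expi (-t) = 1 := by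
  rw [expi, expi, ← Complex.exp_add,
    show (2 * (Real.pi : ℂ) * Complex.I * t + 2 * Real.pi * Complex.I * (-t : ℝ)) = 0 by
      push_cast; ring, Complex.exp_zero]

/-- The norm of a function in `S^c` is doubly `1`-periodic. -/
lemma IsSc.norm_fract {c : ℕ} {Φ : ℝ → ℝ → ℤ → ℂ} (hΦ : IsSc c Φ) (x y : ℝ) (p : ℤ) :
    ‖Φ x y p‖ = ‖Φ (Int.fract x) (Int.fract y) p‖ := by
  have hy : ∀ x' : ℝ, Φ x' y p = Φ x' (Int.fract y) p := by
    intro x'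
    have hper : Function.Periodic (fun y' => Φ x' y' p) 1 := fun y' => hΦ.2.1 x' y' p
    have h := (hper.int_mul ⌊y⌋) (Int.fract y)
    rw [show (Int.fract y + (⌊y⌋ : ℝ) * 1) = y by rw [mul_one, Int.fract]; ring] at h
    exact h
  have hx : ‖Φ x (Int.fract y) p‖ = ‖Φ (Int.fract x) (Int.fract y) p‖ := by
    have h := hΦ.2.2.1 ⌊x⌋ (Int.fract x) (Int.fract y) p
    rw [show Int.fract x + (⌊x⌋ : ℝ) = x by rw [Int.fract]; ring] at h
    rw [h, norm_mul, expi_norm, one_mul]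
  rw [hy x, hx]

/-- The fundamental decay bound: functions in `S^c` decay quadratically in `p`,
uniformly in `(x, y)`. -/
lemma IsSc.decay {c : ℕ} {Φ : ℝ → ℝ → ℤ → ℂ} (hΦ : IsSc c Φ) :
    ∃ C : ℝ, 0 ≤ C ∧ ∀ x y : ℝ, ∀ p : ℤ, ‖Φ x y p‖ ≤ C * (1 + (p : ℝ) ^ 2)⁻¹ := by
  obtain ⟨C, hC⟩ := hΦ.2.2.2 (1 + Polynomial.X ^ 2) 0 0
    (Set.Icc 0 1 ×ˢ Set.Icc 0 1) (isCompact_Icc.prod isCompact_Icc)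
  refine ⟨max C 0, le_max_right _ _, fun x y p => ?_⟩
  have hpos : (0 : ℝ) < 1 + (p : ℝ) ^ 2 := by positivity
  have hmem : ((Int.fract x, Int.fract y) : ℝ × ℝ) ∈ Set.Icc (0:ℝ) 1 ×ˢ Set.Icc (0:ℝ) 1 :=
    ⟨⟨Int.fract_nonneg _, (Int.fract_lt_one _).le⟩, ⟨Int.fract_nonneg _, (Int.fract_lt_one _).le⟩⟩
  have h := hC (Int.fract x) (Int.fract y) p hmem
  simp only [Function.iterate_zero, id] at h
  have heval : (((Polynomial.eval p (1 + Polynomial.X ^ 2) : ℤ)) : ℂ)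
      = ((1 + (p : ℝ) ^ 2 : ℝ) : ℂ) := by push_cast [Polynomial.eval_add, Polynomial.eval_pow,
    Polynomial.eval_one, Polynomial.eval_X]; ring
  rw [heval, norm_mul, Complex.norm_real, Real.norm_eq_abs, abs_of_pos hpos] at h
  have h2 : ‖Φ (Int.fract x) (Int.fract y) p‖ ≤ C * (1 + (p : ℝ) ^ 2)⁻¹ := by
    rw [mul_comm] at h
    calc ‖Φ (Int.fract x) (Int.fract y) p‖
        = ‖Φ (Int.fract x) (Int.fract y) p‖ * (1 + (p : ℝ) ^ 2) * (1 + (p : ℝ) ^ 2)⁻¹ := by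
          field_simp
      _ ≤ C * (1 + (p : ℝ) ^ 2)⁻¹ := by
          apply mul_le_mul_of_nonneg_right h (by positivity)
  rw [hΦ.norm_fract]
  exact h2.trans (mul_le_mul_of_nonneg_right (le_max_left _ _) (by positivity))

lemma summable_inv_one_add_sq : Summable (fun q : ℤ => (1 + (q : ℝ) ^ 2)⁻¹) := by
  have h1 : Summable (fun n : ℕ => ((n : ℝ) ^ 2)⁻¹) := by
    simpa [one_div] using summable_one_div_nat_pow.mpr (by norm_num : 1 < 2)
  have h2 : Summable (fun n : ℕ => (((n : ℝ) + 1) ^ 2)⁻¹) := by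
    have := (summable_nat_add_iff 1).mpr h1
    refine this.congr fun n => ?_
    push_cast; ring_nf
  have hnat : Summable (fun n : ℕ => (1 + (n : ℝ) ^ 2)⁻¹) := by
    refine Summable.of_nonneg_of_le (fun n => by positivity) (fun n => ?_) (h2.mul_left 2)
    have hn0 : (0 : ℝ) ≤ (n : ℝ) := Nat.cast_nonneg n
    have hp1 : (0 : ℝ) < 1 + (n : ℝ) ^ 2 := by positivity
    have hp2 : (0 : ℝ) < ((n : ℝ) + 1) ^ 2 := by positivity
    have h := (div_le_div_iff₀ hp1 hp2).mpr (by nlinarith [sq_nonneg ((n:ℝ) - 1)] : (1:ℝ) * ((n:ℝ)+1)^2 ≤ 2 * (1+(n:ℝ)^2))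
    simpa [one_div, div_eq_mul_inv] using h
  refine Summable.of_nat_of_neg (by simpa using hnat) ?_
  refine hnat.congr fun n => ?_
  simp

/-- Shift invariance of the integral over a period of a `1`-periodic function. -/
lemma shift_one {h : ℝ → ℂ} (hp : Function.Periodic h 1) (b : ℝ) :
    ∫ y in (0:ℝ)..1, h (y + b) = ∫ y in (0:ℝ)..1, h y := by
  rw [intervalIntegral.integral_comp_add_right]
  have := hp.intervalIntegral_add_eq b 0
  simpa [zero_add, add_comm] using this

/-- Shift invariance for doubly periodic functions of two variables. -/
lemma shift_two {G : ℝ → ℝ → ℂ} (hx : ∀ y, Function.Periodic (fun x => G x y) 1)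
    (hy : ∀ x, Function.Periodic (fun y => G x y) 1) (a b : ℝ) :
    ∫ x in (0:ℝ)..1, ∫ y in (0:ℝ)..1, G (x + a) (y + b)
      = ∫ x in (0:ℝ)..1, ∫ y in (0:ℝ)..1, G x y := by
  have h1 : (∫ x in (0:ℝ)..1, ∫ y in (0:ℝ)..1, G (x + a) (y + b))
      = ∫ x in (0:ℝ)..1, ∫ y in (0:ℝ)..1, G (x + a) y := by
    refine intervalIntegral.integral_congr fun x _ => ?_
    exact shift_one (hy (x + a)) b
  rw [h1]
  have hper : Function.Periodic (fun x => ∫ y in (0:ℝ)..1, G x y) 1 := by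
    intro x
    exact intervalIntegral.integral_congr fun y _ => hx y x
  exact shift_one hper a

lemma lint_bound {g : ℝ → ℂ} {D : ℝ} (hg : ∀ y, ‖g y‖ ≤ D) :
    ∫⁻ y in Set.Ioc (0:ℝ) 1, (‖g y‖₊ : ENNReal) ≤ ENNReal.ofReal D := by
  calc ∫⁻ y in Set.Ioc (0:ℝ) 1, (‖g y‖₊ : ENNReal)
      ≤ ∫⁻ _ in Set.Ioc (0:ℝ) 1, ENNReal.ofReal D := by
        refine lintegral_mono fun y => ?_
        rw [← enorm_eq_nnnorm, ← ofReal_norm]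
        exact ENNReal.ofReal_le_ofReal (hg y)
    _ = ENNReal.ofReal D * volume (Set.Ioc (0:ℝ) 1) := by
        rw [MeasureTheory.lintegral_const, Measure.restrict_apply_univ]
    _ = ENNReal.ofReal D := by simp

/-- Interchange of a `tsum` over `ℤ` with a double interval integral, given
uniform quadratic decay. -/
lemma interchange (F : ℤ → ℝ → ℝ → ℂ)
    (hcont : ∀ q, Continuous (fun xy : ℝ × ℝ => F q xy.1 xy.2))
    (C : ℝ) (hC : ∀ q x y, ‖F q x y‖ ≤ C * (1 + (q : ℝ) ^ 2)⁻¹) :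
    (∫ x in (0:ℝ)..1, ∫ y in (0:ℝ)..1, ∑' q : ℤ, F q x y)
      = ∑' q : ℤ, ∫ x in (0:ℝ)..1, ∫ y in (0:ℝ)..1, F q x y := by
  have h01 : (0:ℝ) ≤ 1 := zero_le_one
  have hCnn : ∀ q : ℤ, 0 ≤ C * (1 + (q : ℝ) ^ 2)⁻¹ :=
    fun q => le_trans (norm_nonneg _) (hC q 0 0)
  have hsum : Summable (fun q : ℤ => C * (1 + (q : ℝ) ^ 2)⁻¹) :=
    summable_inv_one_add_sq.mul_left C
  have htop : (∑' q : ℤ, ENNReal.ofReal (C * (1 + (q : ℝ) ^ 2)⁻¹)) ≠ ⊤ := by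
    rw [← ENNReal.ofReal_tsum_of_nonneg hCnn hsum]
    exact ENNReal.ofReal_ne_top
  -- inner interchange
  have inner : ∀ x : ℝ,
      (∫ y in (0:ℝ)..1, ∑' q : ℤ, F q x y) = ∑' q : ℤ, ∫ y in (0:ℝ)..1, F q x y := by
    intro x
    rw [intervalIntegral.integral_of_le h01]
    rw [MeasureTheory.integral_tsum (μ := volume.restrict (Set.Ioc (0:ℝ) 1))
      (f := fun q y => F q x y)
      (fun q => (((hcont q).comp (Continuous.prodMk_right x)).aestronglyMeasurable))
      (by
        refine ne_top_of_le_ne_top htop (ENNReal.tsum_le_tsum fun q => ?_)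
        exact lint_bound fun y => hC q x y)]
    exact tsum_congr fun q => (intervalIntegral.integral_of_le h01).symm
  rw [intervalIntegral.integral_congr (fun x _ => inner x)]
  -- outer interchange
  have hmeas : ∀ q : ℤ, StronglyMeasurable
      (fun x : ℝ => ∫ y, F q x y ∂(volume.restrict (Set.Ioc (0:ℝ) 1))) := fun q =>
    ((hcont q).stronglyMeasurable).integral_prod_right
  have hIocfin : volume (Set.Ioc (0:ℝ) 1) < ⊤ := by simp
  have hnorm : ∀ (q : ℤ) (x : ℝ),
      ‖∫ y in (0:ℝ)..1, F q x y‖ ≤ C * (1 + (q : ℝ) ^ 2)⁻¹ := by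
    intro q x
    rw [intervalIntegral.integral_of_le h01]
    have := norm_setIntegral_le_of_norm_le_const (μ := volume) (s := Set.Ioc (0:ℝ) 1)
      (f := fun y => F q x y) hIocfin (fun y _ => hC q x y)
    simpa using this
  rw [intervalIntegral.integral_of_le h01]
  rw [MeasureTheory.integral_tsum (μ := volume.restrict (Set.Ioc (0:ℝ) 1))
    (f := fun q x => ∫ y in (0:ℝ)..1, F q x y)
    (fun q => by
      refine ((hmeas q).aestronglyMeasurable).congr
        (Filter.Eventually.of_forall fun x => ?_)
      exact (intervalIntegral.integral_of_le h01).symm)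
    (by
      refine ne_top_of_le_ne_top htop (ENNReal.tsum_le_tsum fun q => ?_)
      exact lint_bound fun x => hnorm q x)]
  exact tsum_congr fun q => (intervalIntegral.integral_of_le h01).symm

/-- the functional `τ(Φ) = ∫₀¹∫_𝕋 Φ(x,y,0) dy dx` is tracial. -/
theorem tau_tracial (c : ℕ) (hc : 0 < c) (hbar μ ν : ℝ)
    (hμν : μ ^ 2 + ν ^ 2 ≠ 0) (Φ Ψ : ℝ → ℝ → ℤ → ℂ) (hΦ : IsSc c Φ) (hΨ : IsSc c Ψ) :
    tauQHM (starProd hbar μ ν Φ Ψ) = tauQHM (starProd hbar μ ν Ψ Φ) := by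
  -- the doubly-periodic product functions
  set G : ℤ → ℝ → ℝ → ℂ := fun q x y => Φ x y q * Ψ x y (-q) with hG
  -- periodicity of G in each variable
  have hGx : ∀ (q : ℤ) (y : ℝ), Function.Periodic (fun x => G q x y) 1 := by
    intro q y x
    have h1 : Φ (x + 1) y q = expi ((c : ℝ) * q * y) * Φ x y q := by
      have := hΦ.2.2.1 1 x y q; simpa using this
    have h2 : Ψ (x + 1) y (-q) = expi (-((c : ℝ) * q * y)) * Ψ x y (-q) := by
      have := hΨ.2.2.1 1 x y (-q)
      have harg : (c : ℝ) * ((1:ℤ) : ℝ) * ((-q : ℤ) : ℝ) * y = -((c : ℝ) * q * y) := by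
        push_cast; ring
      rw [harg] at this; simpa using this
    simp only [G, h1, h2]
    have := expi_mul_expi_neg ((c : ℝ) * q * y)
    calc expi ((c:ℝ) * q * y) * Φ x y q * (expi (-((c:ℝ) * q * y)) * Ψ x y (-q))
        = (expi ((c:ℝ) * q * y) * expi (-((c:ℝ) * q * y))) * (Φ x y q * Ψ x y (-q)) := by ring
      _ = Φ x y q * Ψ x y (-q) := by rw [this, one_mul]
  have hGy : ∀ (q : ℤ) (x : ℝ), Function.Periodic (fun y => G q x y) 1 := by
    intro q x y
    simp only [G, hΦ.2.1, hΨ.2.1]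
  -- continuity of the shifted product terms
  have contG : ∀ (q : ℤ) (a b : ℝ),
      Continuous (fun xy : ℝ × ℝ => G q (xy.1 - a) (xy.2 - b)) := by
    intro q a b
    have hshift : Continuous (fun xy : ℝ × ℝ => (xy.1 - a, xy.2 - b) : ℝ × ℝ → ℝ × ℝ) :=
      (continuous_fst.sub continuous_const).prodMk (continuous_snd.sub continuous_const)
    exact (((hΦ.1 q).continuous.comp hshift).mul (((hΨ.1 (-q)).continuous.comp hshift)))
  -- decay bounds
  obtain ⟨CΦ, hCΦ0, hCΦ⟩ := hΦ.decay
  obtain ⟨CΨ, hCΨ0, hCΨ⟩ := hΨ.decay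
  have hGbound : ∀ (q : ℤ) (x y : ℝ), ‖G q x y‖ ≤ (CΦ * CΨ) * (1 + (q : ℝ) ^ 2)⁻¹ := by
    intro q x y
    have hinv1 : (0:ℝ) ≤ (1 + (q : ℝ) ^ 2)⁻¹ := by positivity
    have hΨle : ‖Ψ x y (-q)‖ ≤ CΨ := by
      refine (hCΨ x y (-q)).trans ?_
      have : (1 + ((-q : ℤ) : ℝ) ^ 2)⁻¹ ≤ 1 := by
        rw [inv_le_one_iff₀]; right; nlinarith [sq_nonneg (((-q : ℤ)) : ℝ)]
      calc CΨ * (1 + ((-q : ℤ) : ℝ) ^ 2)⁻¹ ≤ CΨ * 1 :=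
            mul_le_mul_of_nonneg_left this hCΨ0
        _ = CΨ := mul_one _
    calc ‖G q x y‖ = ‖Φ x y q‖ * ‖Ψ x y (-q)‖ := norm_mul _ _
      _ ≤ (CΦ * (1 + (q : ℝ) ^ 2)⁻¹) * CΨ :=
          mul_le_mul (hCΦ x y q) hΨle (norm_nonneg _) (by positivity)
      _ = (CΦ * CΨ) * (1 + (q : ℝ) ^ 2)⁻¹ := by ring
  -- the same bound applies to the reversed product
  have hGbound' : ∀ (q : ℤ) (x y : ℝ),
      ‖Ψ x y q * Φ x y (-q)‖ ≤ (CΦ * CΨ) * (1 + (q : ℝ) ^ 2)⁻¹ := by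
    intro q x y
    have hΦle : ‖Φ x y (-q)‖ ≤ CΦ := by
      refine (hCΦ x y (-q)).trans ?_
      have : (1 + ((-q : ℤ) : ℝ) ^ 2)⁻¹ ≤ 1 := by
        rw [inv_le_one_iff₀]; right; nlinarith [sq_nonneg (((-q : ℤ)) : ℝ)]
      calc CΦ * (1 + ((-q : ℤ) : ℝ) ^ 2)⁻¹ ≤ CΦ * 1 :=
            mul_le_mul_of_nonneg_left this hCΦ0
        _ = CΦ := mul_one _
    calc ‖Ψ x y q * Φ x y (-q)‖ = ‖Ψ x y q‖ * ‖Φ x y (-q)‖ := norm_mul _ _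
      _ ≤ (CΨ * (1 + (q : ℝ) ^ 2)⁻¹) * CΦ :=
          mul_le_mul (hCΨ x y q) hΦle (norm_nonneg _) (by positivity)
      _ = (CΦ * CΨ) * (1 + (q : ℝ) ^ 2)⁻¹ := by ring
  -- unfold the trace of the two products
  have hLHS : tauQHM (starProd hbar μ ν Φ Ψ)
      = ∫ x in (0:ℝ)..1, ∫ y in (0:ℝ)..1,
          ∑' q : ℤ, G q (x - hbar * (q : ℝ) * μ) (y - hbar * (q : ℝ) * ν) := by
    unfold tauQHM starProd
    refine intervalIntegral.integral_congr fun x _ => ?_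
    refine intervalIntegral.integral_congr fun y _ => ?_
    refine tsum_congr fun q => ?_
    simp [G]
  have hRHS : tauQHM (starProd hbar μ ν Ψ Φ)
      = ∫ x in (0:ℝ)..1, ∫ y in (0:ℝ)..1,
          ∑' q : ℤ, Ψ (x - hbar * (q : ℝ) * μ) (y - hbar * (q : ℝ) * ν) q
            * Φ (x - hbar * (q : ℝ) * μ) (y - hbar * (q : ℝ) * ν) (-q) := by
    unfold tauQHM starProd
    refine intervalIntegral.integral_congr fun x _ => ?_
    refine intervalIntegral.integral_congr fun y _ => ?_
    refine tsum_congr fun q => ?_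
    simp
  rw [hLHS, hRHS]
  -- interchange sum and integrals on both sides
  rw [interchange (fun q x y => G q (x - hbar * (q : ℝ) * μ) (y - hbar * (q : ℝ) * ν))
      (fun q => contG q (hbar * (q : ℝ) * μ) (hbar * (q : ℝ) * ν)) (CΦ * CΨ)
      (fun q x y => hGbound q _ _)]
  rw [interchange (fun q x y => Ψ (x - hbar * (q : ℝ) * μ) (y - hbar * (q : ℝ) * ν) q
        * Φ (x - hbar * (q : ℝ) * μ) (y - hbar * (q : ℝ) * ν) (-q))
      (fun q => by
        have hshift : Continuous
            (fun xy : ℝ × ℝ =>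
              (xy.1 - hbar * (q : ℝ) * μ, xy.2 - hbar * (q : ℝ) * ν) : ℝ × ℝ → ℝ × ℝ) :=
          (continuous_fst.sub continuous_const).prodMk (continuous_snd.sub continuous_const)
        exact (((hΨ.1 q).continuous.comp hshift).mul (((hΦ.1 (-q)).continuous.comp hshift))))
      (CΦ * CΨ) (fun q x y => hGbound' q _ _)]
  -- each term on the left equals ∫∫ G q
  have hterm : ∀ q : ℤ,
      (∫ x in (0:ℝ)..1, ∫ y in (0:ℝ)..1,
        G q (x - hbar * (q : ℝ) * μ) (y - hbar * (q : ℝ) * ν))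
      = ∫ x in (0:ℝ)..1, ∫ y in (0:ℝ)..1, G q x y := by
    intro q
    have h := shift_two (hGx q) (hGy q) (-(hbar * (q : ℝ) * μ)) (-(hbar * (q : ℝ) * ν))
    simpa [sub_eq_add_neg] using h
  -- each term on the right (reindexed by -q) also equals ∫∫ G q
  have hterm' : ∀ q : ℤ,
      (∫ x in (0:ℝ)..1, ∫ y in (0:ℝ)..1,
        Ψ (x - hbar * ((-q : ℤ) : ℝ) * μ) (y - hbar * ((-q : ℤ) : ℝ) * ν) (-q)
          * Φ (x - hbar * ((-q : ℤ) : ℝ) * μ) (y - hbar * ((-q : ℤ) : ℝ) * ν) (-(-q)))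
      = ∫ x in (0:ℝ)..1, ∫ y in (0:ℝ)..1, G q x y := by
    intro q
    have hre : ∀ x y : ℝ,
        Ψ (x - hbar * ((-q : ℤ) : ℝ) * μ) (y - hbar * ((-q : ℤ) : ℝ) * ν) (-q)
          * Φ (x - hbar * ((-q : ℤ) : ℝ) * μ) (y - hbar * ((-q : ℤ) : ℝ) * ν) (-(-q))
        = G q (x + hbar * (q : ℝ) * μ) (y + hbar * (q : ℝ) * ν) := by
      intro x y
      have hx : x - hbar * ((-q : ℤ) : ℝ) * μ = x + hbar * (q : ℝ) * μ := by push_cast; ring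
      have hy : y - hbar * ((-q : ℤ) : ℝ) * ν = y + hbar * (q : ℝ) * ν := by push_cast; ring
      rw [hx, hy, neg_neg]
      simp only [G]
      ring
    have h1 : (∫ x in (0:ℝ)..1, ∫ y in (0:ℝ)..1,
        Ψ (x - hbar * ((-q : ℤ) : ℝ) * μ) (y - hbar * ((-q : ℤ) : ℝ) * ν) (-q)
          * Φ (x - hbar * ((-q : ℤ) : ℝ) * μ) (y - hbar * ((-q : ℤ) : ℝ) * ν) (-(-q)))
        = ∫ x in (0:ℝ)..1, ∫ y in (0:ℝ)..1,
            G q (x + hbar * (q : ℝ) * μ) (y + hbar * (q : ℝ) * ν) := by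
      refine intervalIntegral.integral_congr fun x _ => ?_
      refine intervalIntegral.integral_congr fun y _ => ?_
      exact hre x y
    rw [h1]
    exact shift_two (hGx q) (hGy q) (hbar * (q : ℝ) * μ) (hbar * (q : ℝ) * ν)
  calc (∑' q : ℤ, ∫ x in (0:ℝ)..1, ∫ y in (0:ℝ)..1,
          G q (x - hbar * (q : ℝ) * μ) (y - hbar * (q : ℝ) * ν))
      = ∑' q : ℤ, ∫ x in (0:ℝ)..1, ∫ y in (0:ℝ)..1, G q x y := tsum_congr hterm
    _ = ∑' q : ℤ, ∫ x in (0:ℝ)..1, ∫ y in (0:ℝ)..1,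
          Ψ (x - hbar * ((-q : ℤ) : ℝ) * μ) (y - hbar * ((-q : ℤ) : ℝ) * ν) (-q)
            * Φ (x - hbar * ((-q : ℤ) : ℝ) * μ) (y - hbar * ((-q : ℤ) : ℝ) * ν) (-(-q)) :=
        (tsum_congr fun q => (hterm' q).symm)
    _ = ∑' q : ℤ, ∫ x in (0:ℝ)..1, ∫ y in (0:ℝ)..1,
          Ψ (x - hbar * (q : ℝ) * μ) (y - hbar * (q : ℝ) * ν) q
            * Φ (x - hbar * (q : ℝ) * μ) (y - hbar * (q : ℝ) * ν) (-q) := by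
        exact (Equiv.neg ℤ).tsum_eq fun q =>
          ∫ x in (0:ℝ)..1, ∫ y in (0:ℝ)..1,
            Ψ (x - hbar * (q : ℝ) * μ) (y - hbar * (q : ℝ) * ν) q
              * Φ (x - hbar * (q : ℝ) * μ) (y - hbar * (q : ℝ) * ν) (-q)
end
end

section
/- The functional τ is positive and faithful on S^c: for every Φ ∈ S^c, τ(Φ*★Φ) is a nonnegative real number, and τ(Φ*★Φ) = 0 implies Φ = 0. -/
open MeasureTheory Complex

noncomputable section

-- auxiliary lemmas


lemma norm_expi (r : ℝ) : ‖expi r‖ = 1 := by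
  unfold expi
  rw [show (2 * Real.pi * Complex.I * (r:ℂ)) = ((2 * Real.pi * r : ℝ) : ℂ) * Complex.I by
    push_cast; ring]
  rw [Complex.norm_exp_ofReal_mul_I]

lemma sumbase : Summable (fun q : ℤ => ((1:ℝ) + (q:ℝ)^2)⁻¹) := by
  have h2 : Summable (fun q : ℤ => 1 / (q:ℝ)^2) := Real.summable_one_div_int_pow.2 one_lt_two
  have hfin : Summable (fun q : ℤ => if q = 0 then (1:ℝ) else 0) := by
    apply summable_of_finite_support
    apply Set.Finite.subset (Set.finite_singleton 0)
    intro q hq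
    by_contra hq0
    simp only [Set.mem_singleton_iff] at hq0
    simp [Function.mem_support, hq0] at hq
  refine Summable.of_nonneg_of_le (fun q => by positivity) (fun q => ?_) (h2.add hfin)
  by_cases hq : q = 0
  · simp [hq]
  · have hq' : (q:ℝ) ≠ 0 := Int.cast_ne_zero.2 hq
    have hq2 : (0:ℝ) < (q:ℝ)^2 := by positivity
    simp only [hq, if_false, add_zero, one_div]
    apply inv_anti₀ hq2
    linarith

lemma IsSc.y_int {c : ℕ} {Φ : ℝ → ℝ → ℤ → ℂ} (hΦ : IsSc c Φ) (x y : ℝ) (m p : ℤ) :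
    Φ x (y + m) p = Φ x y p := by
  have hper : Function.Periodic (fun y' => Φ x y' p) 1 := fun y' => hΦ.2.1 x y' p
  have h := hper.sub_int_mul_eq (x := y + m) (n := m)
  simpa using h.symm

lemma IsSc.global_bound {c : ℕ} {Φ : ℝ → ℝ → ℤ → ℂ} (hΦ : IsSc c Φ) :
    ∃ C : ℝ, 0 ≤ C ∧ ∀ (x y : ℝ) (p : ℤ), ‖Φ x y p‖ ≤ C * ((1:ℝ) + (p:ℝ)^2)⁻¹ := by
  have hK : IsCompact ((Set.Icc (0:ℝ) 1) ×ˢ (Set.Icc (0:ℝ) 1)) :=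
    isCompact_Icc.prod isCompact_Icc
  obtain ⟨C₀, h₀⟩ := hΦ.2.2.2 1 0 0 _ hK
  obtain ⟨C₂, h₂⟩ := hΦ.2.2.2 (Polynomial.X ^ 2) 0 0 _ hK
  have h₀' : ∀ (x y : ℝ) (p : ℤ), (x, y) ∈ (Set.Icc (0:ℝ) 1) ×ˢ (Set.Icc (0:ℝ) 1) →
      ‖Φ x y p‖ ≤ C₀ := by
    intro x y p hxy
    have := h₀ x y p hxy
    simpa using this
  have h₂' : ∀ (x y : ℝ) (p : ℤ), (x, y) ∈ (Set.Icc (0:ℝ) 1) ×ˢ (Set.Icc (0:ℝ) 1) →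
      (p:ℝ)^2 * ‖Φ x y p‖ ≤ C₂ := by
    intro x y p hxy
    have h := h₂ x y p hxy
    simp only [Polynomial.eval_pow, Polynomial.eval_X, Function.iterate_zero, id_eq,
      norm_mul] at h
    have hn : ‖(((p^2 : ℤ)) : ℂ)‖ = (p:ℝ)^2 := by
      push_cast
      rw [norm_pow]
      simp [sq_abs]
    rw [hn] at h
    exact h
  have hmem0 : ((0:ℝ), (0:ℝ)) ∈ (Set.Icc (0:ℝ) 1) ×ˢ (Set.Icc (0:ℝ) 1) := by
    constructor <;> constructor <;> norm_num
  have hC₀ : 0 ≤ C₀ := le_trans (norm_nonneg _) (h₀' 0 0 0 hmem0)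
  have hC₂ : 0 ≤ C₂ := by
    have := h₂' 0 0 0 hmem0
    simpa using this
  refine ⟨C₀ + C₂, by linarith, ?_⟩
  intro x y p
  have hmem : (Int.fract x, Int.fract y) ∈ (Set.Icc (0:ℝ) 1) ×ˢ (Set.Icc (0:ℝ) 1) :=
    ⟨⟨Int.fract_nonneg x, (Int.fract_lt_one x).le⟩,
     ⟨Int.fract_nonneg y, (Int.fract_lt_one y).le⟩⟩
  have ha := h₀' _ _ p hmem
  have hb := h₂' _ _ p hmem
  rw [hΦ.norm_fract x y p]
  have ht : (0:ℝ) < 1 + (p:ℝ)^2 := by positivity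
  rw [le_mul_inv_iff₀ ht]
  nlinarith [norm_nonneg (Φ (Int.fract x) (Int.fract y) p)]

lemma zero_of_cont_nonneg_integral_zero (g : ℝ → ℝ) (hg : Continuous g) (hnn : ∀ x, 0 ≤ g x)
    (hz : ∫ x in (0:ℝ)..1, g x = 0) : ∀ x ∈ Set.Icc (0:ℝ) 1, g x = 0 := by
  have hint : IntervalIntegrable g volume 0 1 := hg.intervalIntegrable _ _
  have hae : g =ᵐ[volume.restrict (Set.Ioc (0:ℝ) 1)] 0 :=
    (intervalIntegral.integral_eq_zero_iff_of_le_of_nonneg_ae (by norm_num)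
      (Filter.Eventually.of_forall hnn) hint).1 hz
  intro x₀ hx₀
  by_contra hne
  have hpos : 0 < g x₀ := lt_of_le_of_ne (hnn x₀) (Ne.symm hne)
  set U := g ⁻¹' Set.Ioi (g x₀ / 2) with hU
  have hUopen : IsOpen U := isOpen_Ioi.preimage hg
  have hx₀U : x₀ ∈ U := by
    simp only [hU, Set.mem_preimage, Set.mem_Ioi]
    linarith
  have hcl : x₀ ∈ closure (Set.Ioo (0:ℝ) 1) := by
    rw [closure_Ioo (by norm_num : (0:ℝ) ≠ 1)]
    exact hx₀
  have hne' : (U ∩ Set.Ioo 0 1).Nonempty := by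
    rw [mem_closure_iff] at hcl
    exact hcl U hUopen hx₀U
  have hopen2 : IsOpen (U ∩ Set.Ioo 0 1) := hUopen.inter isOpen_Ioo
  have hmeaspos : 0 < volume (U ∩ Set.Ioo 0 1) := hopen2.measure_pos volume hne'
  have hnull : volume.restrict (Set.Ioc (0:ℝ) 1) {x | g x ≠ 0} = 0 := by
    have h := hae
    rw [Filter.EventuallyEq, ae_iff] at h
    simpa using h
  have hsub : U ∩ Set.Ioo 0 1 ⊆ {x | g x ≠ 0} ∩ Set.Ioc 0 1 := by
    rintro x ⟨hxU, hxI⟩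
    refine ⟨?_, hxI.1, hxI.2.le⟩
    have : g x₀ / 2 < g x := hxU
    intro h
    rw [h] at this
    linarith
  have hle : volume (U ∩ Set.Ioo 0 1) ≤ 0 := by
    calc volume (U ∩ Set.Ioo 0 1) ≤ volume ({x | g x ≠ 0} ∩ Set.Ioc 0 1) := measure_mono hsub
    _ = volume.restrict (Set.Ioc (0:ℝ) 1) {x | g x ≠ 0} :=
        (Measure.restrict_apply' measurableSet_Ioc).symm
    _ = 0 := hnull
  exact absurd hle hmeaspos.not_ge

/-- `τ` is positive and faithful: `τ(Φ*★Φ)` is a nonnegative real number,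
and it vanishes only if `Φ = 0`. -/
theorem tau_positive_faithful (c : ℕ) (hc : 0 < c) (hbar μ ν : ℝ)
    (hμν : μ ^ 2 + ν ^ 2 ≠ 0) (Φ : ℝ → ℝ → ℤ → ℂ) (hΦ : IsSc c Φ) :
    (tauQHM (starProd hbar μ ν (invol Φ) Φ)).im = 0 ∧
    0 ≤ (tauQHM (starProd hbar μ ν (invol Φ) Φ)).re ∧
    (tauQHM (starProd hbar μ ν (invol Φ) Φ) = 0 → ∀ (x y : ℝ) (p : ℤ), Φ x y p = 0) := by
  set e : ℤ → ℝ → ℝ → ℝ := fun q x y =>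
    Complex.normSq (Φ (x - hbar * (q:ℝ) * μ) (y - hbar * (q:ℝ) * ν) (-q)) with he_def
  obtain ⟨C, hC0, hC⟩ := hΦ.global_bound
  set u : ℤ → ℝ := fun q => C^2 * ((1:ℝ) + (q:ℝ)^2)⁻¹ with hu_def
  have hu : Summable u := sumbase.mul_left _
  have he0 : ∀ (q : ℤ) (x y : ℝ), 0 ≤ e q x y := fun q x y => Complex.normSq_nonneg _
  have hle : ∀ (q : ℤ) (x y : ℝ), e q x y ≤ u q := by
    intro q x y
    have hb := hC (x - hbar * (q:ℝ) * μ) (y - hbar * (q:ℝ) * ν) (-q)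
    rw [show (((-q : ℤ)):ℝ) = -(q:ℝ) by push_cast; ring, neg_sq] at hb
    have ht : (0:ℝ) < 1 + (q:ℝ)^2 := by positivity
    have ht1 : ((1:ℝ) + (q:ℝ)^2)⁻¹ ≤ 1 := by
      rw [inv_le_one_iff₀]
      right
      nlinarith
    have hns : e q x y = ‖Φ (x - hbar * (q:ℝ) * μ) (y - hbar * (q:ℝ) * ν) (-q)‖^2 := by
      rw [he_def]
      simp [Complex.sq_norm]
    rw [hns]
    simp only [hu_def]
    have hnn := norm_nonneg (Φ (x - hbar * (q:ℝ) * μ) (y - hbar * (q:ℝ) * ν) (-q))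
    have hsq : ‖Φ (x - hbar * (q:ℝ) * μ) (y - hbar * (q:ℝ) * ν) (-q)‖^2
        ≤ (C * ((1:ℝ) + (q:ℝ)^2)⁻¹)^2 := by nlinarith
    have htn : (0:ℝ) ≤ ((1:ℝ) + (q:ℝ)^2)⁻¹ := inv_nonneg.2 ht.le
    have h3 : (C * ((1:ℝ) + (q:ℝ)^2)⁻¹)^2 ≤ C^2 * ((1:ℝ) + (q:ℝ)^2)⁻¹ := by
      calc (C * ((1:ℝ) + (q:ℝ)^2)⁻¹)^2
          = C^2 * ((1:ℝ) + (q:ℝ)^2)⁻¹ * ((1:ℝ) + (q:ℝ)^2)⁻¹ := by ring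
      _ ≤ C^2 * ((1:ℝ) + (q:ℝ)^2)⁻¹ * 1 :=
          mul_le_mul_of_nonneg_left ht1 (mul_nonneg (sq_nonneg C) htn)
      _ = C^2 * ((1:ℝ) + (q:ℝ)^2)⁻¹ := by ring
    linarith
  have hsum : ∀ x y : ℝ, Summable (fun q => e q x y) := fun x y =>
    Summable.of_nonneg_of_le (fun q => he0 q x y) (fun q => hle q x y) hu
  have hSP : ∀ x y : ℝ, starProd hbar μ ν (invol Φ) Φ x y 0 = ((∑' q, e q x y : ℝ) : ℂ) := by
    intro x y
    rw [Complex.ofReal_tsum]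
    unfold starProd
    refine tsum_congr fun q => ?_
    simp only [invol, he_def, Int.cast_zero, sub_zero, zero_sub]
    rw [mul_comm, Complex.mul_conj]
  have hτ : tauQHM (starProd hbar μ ν (invol Φ) Φ)
      = ((∫ x in (0:ℝ)..1, ∫ y in (0:ℝ)..1, ∑' q, e q x y : ℝ) : ℂ) := by
    unfold tauQHM
    rw [← intervalIntegral.integral_ofReal]
    apply intervalIntegral.integral_congr
    intro x _
    show (∫ y in (0:ℝ)..1, starProd hbar μ ν (invol Φ) Φ x y 0)
      = ((∫ y in (0:ℝ)..1, ∑' q, e q x y : ℝ) : ℂ)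
    rw [← intervalIntegral.integral_ofReal]
    apply intervalIntegral.integral_congr
    intro y _
    exact hSP x y
  refine ⟨?_, ?_, ?_⟩
  · rw [hτ]; exact Complex.ofReal_im _
  · rw [hτ, Complex.ofReal_re]
    apply intervalIntegral.integral_nonneg (by norm_num)
    intro x _
    apply intervalIntegral.integral_nonneg (by norm_num)
    intro y _
    exact tsum_nonneg (fun q => he0 q x y)
  · intro h0 X Y p
    rw [hτ] at h0
    have hT0 : (∫ x in (0:ℝ)..1, ∫ y in (0:ℝ)..1, ∑' q, e q x y) = 0 := by
      exact_mod_cast h0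
    have hE : Continuous fun w : ℝ × ℝ => ∑' q, e q w.1 w.2 := by
      apply continuous_tsum ?_ hu ?_
      · intro q
        simp only [he_def]
        have hc1 : Continuous fun w : ℝ × ℝ =>
            (w.1 - hbar * (q:ℝ) * μ, w.2 - hbar * (q:ℝ) * ν) := by fun_prop
        exact Complex.continuous_normSq.comp ((hΦ.1 (-q)).continuous.comp hc1)
      · intro q w
        rw [Real.norm_eq_abs, _root_.abs_of_nonneg (he0 q w.1 w.2)]
        exact hle q w.1 w.2
    have hg : Continuous fun x : ℝ => ∫ y in (0:ℝ)..1, ∑' q, e q x y := by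
      exact intervalIntegral.continuous_parametric_intervalIntegral_of_continuous'
        (f := fun x y => ∑' q, e q x y) (μ := volume) hE 0 1
    have hgz : ∀ x ∈ Set.Icc (0:ℝ) 1, (∫ y in (0:ℝ)..1, ∑' q, e q x y) = 0 :=
      zero_of_cont_nonneg_integral_zero _ hg
        (fun x => intervalIntegral.integral_nonneg (by norm_num)
          (fun y _ => tsum_nonneg fun q => he0 q x y)) hT0
    have hEz : ∀ x ∈ Set.Icc (0:ℝ) 1, ∀ y ∈ Set.Icc (0:ℝ) 1, (∑' q, e q x y) = 0 := by
      intro x hx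
      apply zero_of_cont_nonneg_integral_zero _
        (hE.comp (continuous_const.prodMk continuous_id))
        (fun y => tsum_nonneg fun q => he0 q x y) (hgz x hx)
    have hvan : ∀ (q : ℤ), ∀ x ∈ Set.Icc (0:ℝ) 1, ∀ y ∈ Set.Icc (0:ℝ) 1,
        Φ (x - hbar * (q:ℝ) * μ) (y - hbar * (q:ℝ) * ν) (-q) = 0 := by
      intro q x hx y hy
      have h1 : e q x y = 0 := by
        refine le_antisymm ?_ (he0 q x y)
        calc e q x y ≤ ∑' r, e r x y := Summable.le_tsum (hsum x y) q (fun r _ => he0 r x y)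
        _ = 0 := hEz x hx y hy
      rw [he_def] at h1
      exact Complex.normSq_eq_zero.mp h1
    set a : ℝ := X - hbar * (p:ℝ) * μ with ha
    set b : ℝ := Y - hbar * (p:ℝ) * ν with hb
    have hvp := hvan (-p) (Int.fract a)
      ⟨Int.fract_nonneg a, (Int.fract_lt_one a).le⟩ (Int.fract b)
      ⟨Int.fract_nonneg b, (Int.fract_lt_one b).le⟩
    rw [show (((-p : ℤ)):ℝ) = -(p:ℝ) by push_cast; ring, neg_neg] at hvp
    rw [show Int.fract a - hbar * -(p:ℝ) * μ = Int.fract a + hbar * (p:ℝ) * μ by ring,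
        show Int.fract b - hbar * -(p:ℝ) * ν = Int.fract b + hbar * (p:ℝ) * ν by ring] at hvp
    have hXa : (Int.fract a + hbar * (p:ℝ) * μ) + ((⌊a⌋ : ℤ) : ℝ) = X := by
      have h := Int.fract_add_floor a
      rw [ha] at h
      linarith
    have hY : Φ (Int.fract a + hbar * (p:ℝ) * μ) Y p
        = Φ (Int.fract a + hbar * (p:ℝ) * μ) (Int.fract b + hbar * (p:ℝ) * ν) p := by
      have h := hΦ.y_int (Int.fract a + hbar * (p:ℝ) * μ)
        (Int.fract b + hbar * (p:ℝ) * ν) ⌊b⌋ p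
      rw [show (Int.fract b + hbar * (p:ℝ) * ν) + ((⌊b⌋ : ℤ) : ℝ) = Y from by
        have h2 := Int.fract_add_floor b
        rw [hb] at h2
        linarith] at h
      exact h
    calc Φ X Y p = Φ ((Int.fract a + hbar * (p:ℝ) * μ) + ((⌊a⌋ : ℤ) : ℝ)) Y p := by rw [hXa]
    _ = expi ((c:ℝ) * ((⌊a⌋:ℤ):ℝ) * (p:ℝ) * Y) * Φ (Int.fract a + hbar * (p:ℝ) * μ) Y p :=
        hΦ.2.2.1 ⌊a⌋ (Int.fract a + hbar * (p:ℝ) * μ) Y p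
    _ = 0 := by rw [hY, hvp, mul_zero]
end
end
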